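/- arXiv:1907.12394 — 5 statements merged into one kernel-verified Lean document; each statement's English description precedes it below -/
import Mathlib

section
/- Let △ be a continuous t-norm on I = [0,1], ▽ a continuous t-conorm on I, and ⋆ a binary operation on I. Then the convolutions ⋏ and ⋎ are both commutative on L (i.e., f ⋏ g = g ⋏ f and f ⋎ g = g ⋎ f for all f, g ∈ L) if and only if ⋆ is commutative on I. -/
open unitInterval

noncomputable section

instance : Fact ((0:ℝ) ≤ 1) := ⟨zero_le_one⟩

/-- A function `f : I → I` is normal if `sup {f x : x ∈ I} = 1`. -/
def IsNormal (f : I → I) : Prop := sSup (Set.range f) = 1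

/-- A function `f : I → I` is convex if `f y ≥ min (f x) (f z)` whenever `x ≤ y ≤ z`. -/
def IsConvexFn (f : I → I) : Prop :=
  ∀ x y z : I, x ≤ y → y ≤ z → min (f x) (f z) ≤ f y

/-- Membership in `L`, the set of normal convex functions from `I` to `I`. -/
def InL (f : I → I) : Prop := IsNormal f ∧ IsConvexFn f

/-- A t-norm on `I`: commutative, associative, increasing in each argument,
with neutral element `1`. -/
def IsTnorm (op : I → I → I) : Prop :=
  (∀ x y : I, op x y = op y x) ∧
  (∀ x y z : I, op (op x y) z = op x (op y z)) ∧
  (∀ y : I, Monotone fun x => op x y) ∧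
  (∀ x : I, Monotone fun y => op x y) ∧
  (∀ x : I, op 1 x = x) ∧ (∀ x : I, op x 1 = x)

/-- A t-conorm on `I`: commutative, associative, increasing in each argument,
with neutral element `0`. -/
def IsTconorm (op : I → I → I) : Prop :=
  (∀ x y : I, op x y = op y x) ∧
  (∀ x y z : I, op (op x y) z = op x (op y z)) ∧
  (∀ y : I, Monotone fun x => op x y) ∧
  (∀ x : I, Monotone fun y => op x y) ∧
  (∀ x : I, op 0 x = x) ∧ (∀ x : I, op x 0 = x)

/-- Continuity of a binary operation on `I`, as a map `I × I → I`. -/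
def IsCont (op : I → I → I) : Prop := Continuous fun p : I × I => op p.1 p.2

/-- The convolution `(f ⋏ g)(x) = sup {f y ⋆ g z : y △ z = x}` (`star` playing the
role of `⋆` and `tri` the role of `△`); the sup of the empty set is `0`. -/
def conv (star tri : I → I → I) (f g : I → I) : I → I :=
  fun x => sSup {a : I | ∃ y z : I, tri y z = x ∧ a = star (f y) (g z)}

/-- The meet `(f ⊓ g)(x) = sup {min (f y) (g z) : min y z = x}`. -/
def fmeet (f g : I → I) : I → I :=
  fun x => sSup {a : I | ∃ y z : I, min y z = x ∧ a = min (f y) (g z)}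

/-- The partial order `f ⊑ g` iff `f ⊓ g = f`. -/
def sqle (f g : I → I) : Prop := fmeet f g = f

/-- The characteristic function `χ_{x}` of the singleton `{x}`. -/
def chi (x : I) : I → I := fun t => if t = x then 1 else 0

/-- A binary operation `C` on functions is a t-norm on `L` if `L` is closed under `C` and,
on `L`, `C` is commutative, associative, has `χ_{1}` as neutral element, and is increasing
in each argument with respect to `⊑`. -/
def IsTnormOnL (C : (I → I) → (I → I) → (I → I)) : Prop :=
  (∀ f g, InL f → InL g → InL (C f g)) ∧
  (∀ f g, InL f → InL g → C f g = C g f) ∧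
  (∀ f g h, InL f → InL g → InL h → C (C f g) h = C f (C g h)) ∧
  (∀ f, InL f → C f (chi 1) = f) ∧
  (∀ f g h, InL f → InL g → InL h → sqle g h → sqle (C f g) (C f h))

/-- A binary operation `C` on functions is a t-conorm on `L` if `L` is closed under `C` and,
on `L`, `C` is commutative, associative, has `χ_{0}` as neutral element, and is increasing
in each argument with respect to `⊑`. -/
def IsTconormOnL (C : (I → I) → (I → I) → (I → I)) : Prop :=
  (∀ f g, InL f → InL g → InL (C f g)) ∧
  (∀ f g, InL f → InL g → C f g = C g f) ∧
  (∀ f g h, InL f → InL g → InL h → C (C f g) h = C f (C g h)) ∧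
  (∀ f, InL f → C f (chi 0) = f) ∧
  (∀ f g h, InL f → InL g → InL h → sqle g h → sqle (C f g) (C f h))

/-- `f^L (x) = sup {f y : y ≤ x}`. -/
def fL (f : I → I) : I → I := fun x => sSup (f '' Set.Iic x)

/-- `f^R (x) = sup {f y : y ≥ x}`. -/
def fR (f : I → I) : I → I := fun x => sSup (f '' Set.Ici x)

/-- The function `V_x (t) = (x - 1) * t + 1`. -/
def Vfn (x : I) : I → I := fun t =>
  ⟨(x.1 - 1) * t.1 + 1, by
    obtain ⟨hx0, hx1⟩ := x.2; obtain ⟨ht0, ht1⟩ := t.2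
    constructor <;> nlinarith⟩


/-- Auxiliary: the function equal to `x` at `1` and `1` elsewhere. -/
def gfun (x : I) : I → I := fun t => if t = 1 then x else 1

lemma gfun_inL (x : I) : InL (gfun x) := by
  constructor
  · apply le_antisymm
    · exact sSup_le fun a _ => le_one'
    · apply le_sSup
      refine ⟨0, ?_⟩
      simp [gfun, (zero_ne_one : (0:I) ≠ 1)]
  · intro a b c hab hbc
    by_cases hb : b = 1
    · have hc : c = 1 := le_antisymm le_one' (hb ▸ hbc)
      simp only [gfun, if_pos hb, if_pos hc]
      exact min_le_right _ _
    · simp only [gfun, if_neg hb]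
      exact le_one'

lemma tri_eq_one {tri : I → I → I} (htri : IsTnorm tri) {y z : I}
    (h : tri y z = 1) : y = 1 ∧ z = 1 := by
  obtain ⟨_, _, hm1, hm2, hl, hr⟩ := htri
  have h1 : tri y z ≤ y := by
    have := hm2 y (le_one' : z ≤ 1)
    simpa [hr] using this
  have h2 : tri y z ≤ z := by
    have := hm1 z (le_one' : y ≤ 1)
    simpa [hl] using this
  rw [h] at h1 h2
  exact ⟨le_antisymm le_one' h1, le_antisymm le_one' h2⟩

lemma conv_at_one {star tri : I → I → I} (htri : IsTnorm tri) (f g : I → I) :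
    conv star tri f g 1 = star (f 1) (g 1) := by
  have hset : {a : I | ∃ y z : I, tri y z = 1 ∧ a = star (f y) (g z)}
      = {star (f 1) (g 1)} := by
    ext a
    constructor
    · rintro ⟨y, z, hyz, rfl⟩
      obtain ⟨hy, hz⟩ := tri_eq_one htri hyz
      simp [hy, hz]
    · rintro rfl
      exact ⟨1, 1, by simp [htri.2.2.2.2.1 1], rfl⟩
  show sSup {a : I | ∃ y z : I, tri y z = 1 ∧ a = star (f y) (g z)} = _
  rw [hset, sSup_singleton]

theorem stmt_1 (star tri dis : I → I → I)
    (htri : IsTnorm tri) (htric : IsCont tri)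
    (hdis : IsTconorm dis) (hdisc : IsCont dis) :
    ((∀ f g : I → I, InL f → InL g → conv star tri f g = conv star tri g f) ∧
      (∀ f g : I → I, InL f → InL g → conv star dis f g = conv star dis g f)) ↔
    (∀ x y : I, star x y = star y x) := by
  constructor
  · rintro ⟨hc, -⟩ x y
    have h := congrFun (hc (gfun x) (gfun y) (gfun_inL x) (gfun_inL y)) 1
    rw [conv_at_one htri, conv_at_one htri] at h
    simpa [gfun] using h
  · intro hstar
    constructor
    · intro f g _ _
      funext x
      unfold conv
      congr 1
      ext a
      constructor
      · rintro ⟨y, z, hyz, rfl⟩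
        exact ⟨z, y, by rw [htri.1 z y]; exact hyz, (hstar (f y) (g z)).symm ▸ rfl⟩
      · rintro ⟨y, z, hyz, rfl⟩
        exact ⟨z, y, by rw [htri.1 z y]; exact hyz, (hstar (g y) (f z)).symm ▸ rfl⟩
    · intro f g _ _
      funext x
      unfold conv
      congr 1
      ext a
      constructor
      · rintro ⟨y, z, hyz, rfl⟩
        exact ⟨z, y, by rw [hdis.1 z y]; exact hyz, (hstar (f y) (g z)).symm ▸ rfl⟩
      · rintro ⟨y, z, hyz, rfl⟩
        exact ⟨z, y, by rw [hdis.1 z y]; exact hyz, (hstar (g y) (f z)).symm ▸ rfl⟩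
end
end

section
/- Let △ be a continuous t-norm on I = [0,1], ▽ a continuous t-conorm on I, and ⋆ a binary operation on I. If the convolutions ⋏ and ⋎ are both associative on L (i.e., (f ⋏ g) ⋏ h = f ⋏ (g ⋏ h) and (f ⋎ g) ⋎ h = f ⋎ (g ⋎ h) for all f, g, h ∈ L), then ⋆ is associative on I. -/
open unitInterval

noncomputable section

lemma I_le_one (a : I) : a ≤ (1 : I) := by
  exact a.2.2

lemma tnorm_eq_one {tri : I → I → I} (htri : IsTnorm tri) {u v : I}
    (h : tri u v = 1) : u = 1 ∧ v = 1 := by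
  obtain ⟨comm, assoc, mono1, mono2, onemul, mulone⟩ := htri
  constructor
  · refine le_antisymm (I_le_one u) ?_
    calc (1 : I) = tri u v := h.symm
    _ ≤ tri u 1 := mono2 u (I_le_one v)
    _ = u := mulone u
  · refine le_antisymm (I_le_one v) ?_
    calc (1 : I) = tri u v := h.symm
    _ ≤ tri 1 v := mono1 v (I_le_one u)
    _ = v := onemul v

lemma Vfn_at_one (x : I) : Vfn x 1 = x := by
  apply Subtype.ext
  show (x.1 - 1) * (1 : ℝ) + 1 = x.1
  ring

lemma Vfn_antitone (x : I) : Antitone (Vfn x) := by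
  intro a b hab
  have hx : x.1 - 1 ≤ 0 := by have := x.2.2; linarith
  have hab' : (a : ℝ) ≤ b := hab
  show (x.1 - 1) * b.1 + 1 ≤ (x.1 - 1) * a.1 + 1
  nlinarith

lemma Vfn_inL (x : I) : InL (Vfn x) := by
  constructor
  · refine le_antisymm (sSup_le ?_) (le_sSup ?_)
    · intro a _; exact I_le_one a
    · refine ⟨0, ?_⟩
      apply Subtype.ext
      show (x.1 - 1) * (0 : ℝ) + 1 = 1
      ring
  · intro a b c hab hbc
    exact min_le_of_right_le (Vfn_antitone x hbc)

theorem stmt_2 (star tri dis : I → I → I)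
    (htri : IsTnorm tri) (htric : IsCont tri)
    (hdis : IsTconorm dis) (hdisc : IsCont dis)
    (h1 : ∀ f g h : I → I, InL f → InL g → InL h →
      conv star tri (conv star tri f g) h = conv star tri f (conv star tri g h))
    (h2 : ∀ f g h : I → I, InL f → InL g → InL h →
      conv star dis (conv star dis f g) h = conv star dis f (conv star dis g h)) :
    ∀ x y z : I, star (star x y) z = star x (star y z) := by
  intro x y z
  have key := h1 (Vfn x) (Vfn y) (Vfn z) (Vfn_inL x) (Vfn_inL y) (Vfn_inL z)
  have hkey := congrFun key 1
  rw [conv_at_one htri, conv_at_one htri, conv_at_one htri, conv_at_one htri,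
    Vfn_at_one, Vfn_at_one, Vfn_at_one] at hkey
  exact hkey
end
end

section
/- Let △ be a continuous t-norm on I = [0,1] and ⋆ a binary operation on I. If the convolution ⋏ is a t-norm on L, then 0 ⋆ x = x ⋆ 0 = 0 for all x ∈ I. -/
open unitInterval

noncomputable section

/-!
Take the identity function `id ∈ L`. As `χ_{1}` is the unit, `id ⋏ χ_{1} = id`, and the supremum
defining `(id ⋏ χ_{1})(x △ 0)` contains `x ⋆ χ_{1}(0) = x ⋆ 0`. Since `x △ 0 = 0`, this gives
`x ⋆ 0 ≤ id 0 = 0`; commutativity of `⋏` gives `0 ⋆ x = 0` in the same way.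
-/

lemma IsTnorm.zero_left {tri : I → I → I} (htri : IsTnorm tri) (x : I) : tri 0 x = 0 :=
  le_antisymm ((htri.2.2.2.1 0 le_one').trans_eq (htri.2.2.2.2.2 0)) nonneg'

lemma IsTnorm.zero_right {tri : I → I → I} (htri : IsTnorm tri) (x : I) : tri x 0 = 0 :=
  le_antisymm ((htri.2.2.1 0 le_one').trans_eq (htri.2.2.2.2.1 0)) nonneg'

lemma inL_of_monotone {f : I → I} (hf : Monotone f) (hf1 : f 1 = 1) : InL f :=
  ⟨le_antisymm (sSup_le fun _ _ => le_one') (le_sSup ⟨1, hf1⟩),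
    fun _ _ _ hxy _ => (min_le_left _ _).trans (hf hxy)⟩

lemma inL_id : InL id := inL_of_monotone monotone_id rfl

lemma chi_one_monotone : Monotone (chi 1) := by
  intro a b hab
  by_cases ha : a = 1
  · simp [chi, ha, le_antisymm le_one' (ha ▸ hab)]
  · simp [chi, ha]

lemma inL_chi_one : InL (chi 1) := inL_of_monotone chi_one_monotone (if_pos rfl)

lemma chi_one_zero : chi 1 0 = 0 := if_neg zero_ne_one

lemma star_le_conv_apply (star tri : I → I → I) (f g : I → I) (y z : I) :
    star (f y) (g z) ≤ conv star tri f g (tri y z) :=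
  le_sSup ⟨y, z, rfl, rfl⟩

theorem stmt_4_general (star tri : I → I → I) (htri : IsTnorm tri)
    (h : IsTnormOnL (conv star tri)) :
    ∀ x : I, star 0 x = 0 ∧ star x 0 = 0 := by
  obtain ⟨-, hcomm, -, hunit, -⟩ := h
  have hright : conv star tri id (chi 1) = id := hunit id inL_id
  have hleft : conv star tri (chi 1) id = id := hcomm _ _ inL_chi_one inL_id ▸ hright
  refine fun x => ⟨le_antisymm ?_ nonneg', le_antisymm ?_ nonneg'⟩
  · calc star 0 x = star (chi 1 0) (id x) := by rw [chi_one_zero, id]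
      _ ≤ conv star tri (chi 1) id (tri 0 x) := star_le_conv_apply star tri _ _ 0 x
      _ = 0 := by rw [hleft, id, htri.zero_left]
  · calc star x 0 = star (id x) (chi 1 0) := by rw [chi_one_zero, id]
      _ ≤ conv star tri id (chi 1) (tri x 0) := star_le_conv_apply star tri _ _ x 0
      _ = 0 := by rw [hright, id, htri.zero_right]

theorem stmt_4 (star tri : I → I → I) (htri : IsTnorm tri) (htric : IsCont tri)
    (h : IsTnormOnL (conv star tri)) :
    ∀ x : I, star 0 x = 0 ∧ star x 0 = 0 :=
  stmt_4_general star tri htri h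
end
end

section
/- For all x₁, x₂ ∈ I = [0,1] with x₁ ≤ x₂, the functions V_{x₁} and V_{x₂} defined by V_x(t) = (x − 1)t + 1 satisfy V_{x₁} ⊑ V_{x₂}. -/
open unitInterval

noncomputable section

theorem stmt_7 (x₁ x₂ : I) (h : x₁ ≤ x₂) : sqle (Vfn x₁) (Vfn x₂) := by
  have hmono : ∀ t s : I, t ≤ s → Vfn x₁ s ≤ Vfn x₁ t := by
    intro t s hts
    simp only [Vfn, Subtype.mk_le_mk]
    have := Subtype.coe_le_coe.mpr hts
    nlinarith [x₁.2.2]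
  have hle : ∀ t : I, Vfn x₁ t ≤ Vfn x₂ t := by
    intro t
    simp only [Vfn, Subtype.mk_le_mk]
    have := Subtype.coe_le_coe.mpr h
    nlinarith [t.2.1]
  funext x
  apply le_antisymm
  · apply sSup_le
    rintro a ⟨y, z, hmin, rfl⟩
    rcases le_total y z with hyz | hzy
    · have hy : y = x := by rwa [min_eq_left hyz] at hmin
      rw [← hy]
      exact min_le_left _ _
    · have hz : z = x := by rwa [min_eq_right hzy] at hmin
      rw [← hz]
      exact le_trans (min_le_left _ _) (hmono z y hzy)
  · exact le_sSup ⟨x, x, min_self x, (min_eq_left (hle x)).symm⟩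
end
end

section
/- Let ⋆ be a continuous t-norm on I = [0,1] and △ a binary operation on I. Then the convolution ⋏ defined by (f ⋏ g)(x) = sup{f(y) ⋆ g(z) : y △ z = x} is commutative on L (i.e., f ⋏ g = g ⋏ f for all f, g ∈ L) if and only if △ is commutative on I. -/
open unitInterval

noncomputable section

lemma chi_inL (x : I) : InL (chi x) := by
  constructor
  · apply le_antisymm unitInterval.le_one'
    have : chi x x = 1 := by simp [chi]
    calc (1:I) = chi x x := this.symm
    _ ≤ sSup (Set.range (chi x)) := le_sSup ⟨x, rfl⟩
  · intro a b c hab hbc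
    by_cases hb : b = x
    · have : chi x b = 1 := by simp [chi, hb]
      rw [this]; exact unitInterval.le_one'
    · have h' : a ≠ x ∨ c ≠ x := by
        by_contra h; push_neg at h
        exact hb (le_antisymm (h.2 ▸ hbc) (h.1 ▸ hab))
      rcases h' with h | h
      · have : chi x a = 0 := by simp [chi, h]
        rw [this]
        exact le_trans (min_le_left _ _) unitInterval.nonneg'
      · have : chi x c = 0 := by simp [chi, h]
        rw [this]
        exact le_trans (min_le_right _ _) unitInterval.nonneg'

lemma star_zero_left (star : I → I → I) (h : IsTnorm star) (a : I) : star 0 a = 0 := by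
  obtain ⟨_, _, _, hmono2, _, h1⟩ := h
  have := hmono2 0 (unitInterval.le_one' : a ≤ 1)
  simp only at this
  rw [h1 0] at this
  exact le_antisymm this unitInterval.nonneg'

lemma star_zero_right (star : I → I → I) (h : IsTnorm star) (a : I) : star a 0 = 0 := by
  rw [h.1 a 0]; exact star_zero_left star h a

lemma conv_chi (star tri : I → I → I) (hstar : IsTnorm star) (y z : I) :
    conv star tri (chi y) (chi z) = chi (tri y z) := by
  funext x
  unfold conv
  by_cases h : x = tri y z
  · have h1 : chi (tri y z) x = 1 := by simp [chi, h]
    rw [h1]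
    apply le_antisymm unitInterval.le_one'
    apply le_sSup
    refine ⟨y, z, h.symm, ?_⟩
    simp [chi, hstar.2.2.2.2.2 1]
  · have h1 : chi (tri y z) x = 0 := by simp [chi, h]
    rw [h1]
    apply le_antisymm _ unitInterval.nonneg'
    apply sSup_le
    rintro a ⟨u, v, huv, rfl⟩
    by_cases hu : u = y
    · by_cases hv : v = z
      · exact absurd (hu ▸ hv ▸ huv).symm h
      · have : chi z v = 0 := by simp [chi, hv]
        rw [this, star_zero_right star hstar]
    · have : chi y u = 0 := by simp [chi, hu]
      rw [this, star_zero_left star hstar]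

theorem stmt_14 (star tri : I → I → I) (hstar : IsTnorm star) (hstarc : IsCont star) :
    (∀ f g : I → I, InL f → InL g → conv star tri f g = conv star tri g f) ↔
    (∀ x y : I, tri x y = tri y x) := by
  constructor
  · intro h x y
    have := h (chi x) (chi y) (chi_inL x) (chi_inL y)
    rw [conv_chi star tri hstar, conv_chi star tri hstar] at this
    by_contra hne
    have := congrFun this (tri x y)
    simp only [chi, if_neg hne] at this
    exact absurd (congrArg Subtype.val this) (by norm_num)
  · intro htri f g hf hg
    funext x
    unfold conv
    congr 1
    ext a
    constructor
    · rintro ⟨u, v, huv, rfl⟩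
      exact ⟨v, u, (htri v u).trans huv, hstar.1 (f u) (g v)⟩
    · rintro ⟨u, v, huv, rfl⟩
      exact ⟨v, u, (htri v u).trans huv, hstar.1 (g u) (f v)⟩
end
end
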